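/- Define Q = Σ_{i=r+1}^{r+s} (1−σ_i²)⁻¹ V_i W̃_iᵀ − Σ_{i=r+1}^{r+s} σ_i(1−σ_i²)⁻¹ V_i Z̃_iᵀ + Σ_{i=r+s+1}^{K} V_i W̃_iᵀ ∈ ℝ^{K×n}. Then P_N = W Q, and the spectral norm of Q satisfies ‖Q‖ ≤ 2/(1 − σ_{r+1}²). -/

import Mathlib

/-!
Write `X = Z̃_{(r+1):p}`, `Y = W̃_{(r+1):K}` and `D = XᵀY`, the rectangular diagonal matrix of the
`σ_i` with `i > r`. Then `MᵀM = [[1, D], [Dᵀ, 1]]`, whose inverse is explicit in terms of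
`(1 - DDᵀ)⁻¹` and `(1 - DᵀD)⁻¹`; multiplying out gives `P_N = Y (1 - DᵀD)⁻¹ (Y - XD)ᵀ`.
The matrix `Q` is `V_{(r+1):K} (1 - DᵀD)⁻¹ (Y - XD)ᵀ`, and `W V_{(r+1):K} = Y`, so `P_N = W Q`.
For the bound, matrices with orthonormal columns have norm at most `1`, so `‖Y - XD‖ ≤ 2`, and the
diagonal matrix `(1 - DᵀD)⁻¹` has norm at most `(1 - σ_{r+1}²)⁻¹` because the `σ_i` decrease.
-/

open Matrix

noncomputable def specNorm {m n : Type*} [Fintype m] [Fintype n] [DecidableEq n]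
    (A : Matrix m n ℝ) : ℝ :=
  ‖LinearMap.toContinuousLinearMap (Matrix.toEuclideanLin A)‖

noncomputable def vnorm {n : Type*} [Fintype n] (v : n → ℝ) : ℝ :=
  Real.sqrt (∑ i, v i ^ 2)

namespace Matrix

section Blocks

variable {R : Type*} [CommRing R] {k m n : Type*} [Fintype k] [Fintype m] [Fintype n]
  [DecidableEq m] [DecidableEq n]

theorem fromBlocks_one_mul_fromBlocks_eq_one (D : Matrix m n R) {A : Matrix m m R}
    {B : Matrix n n R} (hA : (1 - D * Dᵀ) * A = 1) (hB : (1 - Dᵀ * D) * B = 1) :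
    fromBlocks 1 D Dᵀ 1 * fromBlocks A (-(D * B)) (-(Dᵀ * A)) B = 1 := by
  rw [fromBlocks_multiply, ← fromBlocks_one]
  congr 1
  · rw [sub_mul, one_mul, Matrix.mul_assoc] at hA
    simpa [sub_eq_add_neg] using hA
  · simp
  · simp
  · rw [sub_mul, one_mul, Matrix.mul_assoc] at hB
    simpa [sub_eq_add_neg, add_comm] using hB

theorem fromCols_zero_mul_inv_mul_transpose (X : Matrix k m R) (Y : Matrix k n R)
    (hX : Xᵀ * X = 1) (hY : Yᵀ * Y = 1) {A : Matrix m m R} {B : Matrix n n R}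
    (hA : (1 - (Xᵀ * Y) * (Xᵀ * Y)ᵀ) * A = 1)
    (hB : (1 - (Xᵀ * Y)ᵀ * (Xᵀ * Y)) * B = 1) :
    fromCols (0 : Matrix k m R) Y * ((fromCols X Y)ᵀ * fromCols X Y)⁻¹ * (fromCols X Y)ᵀ
      = Y * (B * (Y - X * (Xᵀ * Y))ᵀ) := by
  set D := Xᵀ * Y
  have hgram : (fromCols X Y)ᵀ * fromCols X Y = fromBlocks 1 D Dᵀ 1 := by
    rw [transpose_fromCols, fromRows_mul_fromCols, hX, hY, transpose_mul, transpose_transpose]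
  have hcomm : Dᵀ * A = B * Dᵀ := by
    have hB' : B * (1 - Dᵀ * D) = 1 := mul_eq_one_comm.mp hB
    calc Dᵀ * A = B * (1 - Dᵀ * D) * Dᵀ * A := by rw [hB', Matrix.one_mul]
      _ = B * Dᵀ * ((1 - D * Dᵀ) * A) := by
        simp only [Matrix.sub_mul, Matrix.mul_sub, Matrix.one_mul, Matrix.mul_one,
          Matrix.mul_assoc]
      _ = B * Dᵀ := by rw [hA, Matrix.mul_one]
  rw [hgram, inv_eq_right_inv (fromBlocks_one_mul_fromBlocks_eq_one D hA hB),
    fromCols_mul_fromBlocks, transpose_fromCols, fromCols_mul_fromRows]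
  simp only [Matrix.zero_mul, zero_add, transpose_sub, transpose_mul, Matrix.mul_neg,
    ← Matrix.mul_assoc Y Dᵀ A]
  rw [Matrix.mul_assoc Y Dᵀ A, hcomm]
  simp only [Matrix.mul_sub, Matrix.mul_assoc, Matrix.neg_mul, neg_zero, zero_add]
  abel

end Blocks

section L2OpNorm

open scoped Matrix.Norms.L2Operator

variable {k l m n : Type*} [Fintype k] [Fintype l] [Fintype m] [Fintype n]

theorem l2_opNorm_transpose [DecidableEq m] [DecidableEq n] (A : Matrix m n ℝ) :
    ‖Aᵀ‖ = ‖A‖ := by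
  rw [← conjTranspose_eq_transpose_of_trivial, l2_opNorm_conjTranspose]

theorem l2_opNorm_le_one_of_transpose_mul_self_eq_one [DecidableEq n] {A : Matrix m n ℝ}
    (hA : Aᵀ * A = 1) : ‖A‖ ≤ 1 := by
  have h : ‖A‖ * ‖A‖ ≤ 1 := by
    rw [← l2_opNorm_conjTranspose_mul_self, conjTranspose_eq_transpose_of_trivial, hA,
      ← diagonal_one, l2_opNorm_diagonal]
    exact (pi_norm_le_iff_of_nonneg zero_le_one).mpr fun _ => by simp
  nlinarith [norm_nonneg A]

theorem l2_opNorm_diagonal_le [DecidableEq n] {v : n → ℝ} {c : ℝ} (hc : 0 ≤ c)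
    (hv : ∀ i, |v i| ≤ c) : ‖diagonal v‖ ≤ c := by
  rw [l2_opNorm_diagonal]
  exact (pi_norm_le_iff_of_nonneg hc).mpr hv

theorem l2_opNorm_mul_mul_transpose_sub_le [DecidableEq k] [DecidableEq m] [DecidableEq n]
    {V : Matrix l m ℝ} {X : Matrix k n ℝ} {Y : Matrix k m ℝ} {B : Matrix m m ℝ} {c : ℝ}
    (hV : Vᵀ * V = 1) (hX : Xᵀ * X = 1) (hY : Yᵀ * Y = 1) (hB : ‖B‖ ≤ c) :
    ‖V * (B * (Y - X * (Xᵀ * Y))ᵀ)‖ ≤ 2 * c := by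
  have hV1 := l2_opNorm_le_one_of_transpose_mul_self_eq_one hV
  have hX1 := l2_opNorm_le_one_of_transpose_mul_self_eq_one hX
  have hY1 := l2_opNorm_le_one_of_transpose_mul_self_eq_one hY
  have hXt1 : ‖Xᵀ‖ ≤ 1 := (l2_opNorm_transpose X).trans_le hX1
  have hc : 0 ≤ c := (norm_nonneg B).trans hB
  have hXXY : ‖X * (Xᵀ * Y)‖ ≤ 1 := calc
    ‖X * (Xᵀ * Y)‖ ≤ ‖X‖ * ‖Xᵀ * Y‖ := l2_opNorm_mul _ _
    _ ≤ 1 * (1 * 1) := by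
      gcongr
      exact (l2_opNorm_mul _ _).trans (by gcongr)
    _ = 1 := by norm_num
  have hres : ‖(Y - X * (Xᵀ * Y))ᵀ‖ ≤ 2 := by
    rw [l2_opNorm_transpose]
    linarith [norm_sub_le Y (X * (Xᵀ * Y))]
  calc ‖V * (B * (Y - X * (Xᵀ * Y))ᵀ)‖ ≤ ‖V‖ * ‖B * (Y - X * (Xᵀ * Y))ᵀ‖ :=
        l2_opNorm_mul _ _
    _ ≤ 1 * (c * 2) := by
      gcongr
      exact (l2_opNorm_mul _ _).trans (by gcongr)
    _ = 2 * c := by ring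

end L2OpNorm

theorem transpose_mul_self_mul_eq_one {R : Type*} [CommSemiring R] {k m n : Type*} [Fintype k]
    [Fintype m] [DecidableEq m] [Fintype n] [DecidableEq n] {Z : Matrix k m R}
    {U : Matrix m n R} (hZ : Zᵀ * Z = 1) (hU : Uᵀ * U = 1) : (Z * U)ᵀ * (Z * U) = 1 := by
  rw [transpose_mul, Matrix.mul_assoc, ← Matrix.mul_assoc Zᵀ, hZ, Matrix.one_mul, hU]

theorem transpose_mul_mul_eq_of_transpose_mul_eq {R : Type*} [CommSemiring R] {k m n : Type*}
    [Fintype k] [Fintype m] [DecidableEq m] [Fintype n] [DecidableEq n] {Z : Matrix k m R}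
    {W : Matrix k n R} {U : Matrix m m R} {V : Matrix n n R} {S : Matrix m n R}
    (h : Zᵀ * W = U * S * Vᵀ) (hU : Uᵀ * U = 1) (hV : Vᵀ * V = 1) :
    (Z * U)ᵀ * (W * V) = S := by
  rw [transpose_mul, Matrix.mul_assoc, ← Matrix.mul_assoc Zᵀ, h, Matrix.mul_assoc (U * S), hV,
    Matrix.mul_one, ← Matrix.mul_assoc, hU, Matrix.one_mul]

theorem one_sub_diagonal_mul_diagonal_inv {R : Type*} [Field R] {n : Type*} [DecidableEq n]
    [Fintype n] {v : n → R} (hv : ∀ i, v i ≠ 1) :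
    (1 - diagonal v) * diagonal (fun i => (1 - v i)⁻¹) = 1 := by
  rw [← diagonal_one, diagonal_sub, diagonal_mul_diagonal, diagonal_eq_diagonal_iff]
  intro i
  exact mul_inv_cancel₀ (sub_ne_zero.mpr (hv i).symm)

section Columns

variable {R : Type*} {ι κ : Type*}

/-- The paper's `A_{(r+1):q}`; columns are indexed from `0` here. -/
def colsFrom {q : ℕ} (A : Matrix ι (Fin q) R) (r : ℕ) : Matrix ι (Fin (q - r)) R :=
  A.submatrix id fun j => ⟨r + j, by omega⟩

def colOrZero [Zero R] {q : ℕ} (A : Matrix ι (Fin q) R) (i : ℕ) : ι → R :=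
  fun x => if h : i < q then A x ⟨i, h⟩ else 0

def rectDiagonal [Zero R] (a b : ℕ) (d : ℕ → R) : Matrix (Fin a) (Fin b) R :=
  of fun i j => if (i : ℕ) = j then d i else 0

theorem colOrZero_of_lt [Zero R] {q : ℕ} (A : Matrix ι (Fin q) R) {i : ℕ} (h : i < q)
    (x : ι) : colOrZero A i x = A x ⟨i, h⟩ := dif_pos h

theorem colOrZero_colsFrom [Zero R] {q : ℕ} (A : Matrix ι (Fin q) R) (r j : ℕ) :
    colOrZero (colsFrom A r) j = colOrZero A (r + j) := by
  ext x
  by_cases h : r + j < q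
  · rw [colOrZero_of_lt _ (by omega), colOrZero_of_lt _ h]; rfl
  · simp only [colOrZero, dif_neg h, dif_neg (show ¬j < q - r by omega)]

theorem transpose_rectDiagonal [Zero R] (a b : ℕ) (d : ℕ → R) :
    (rectDiagonal a b d)ᵀ = rectDiagonal b a d := by
  ext i j
  simp only [rectDiagonal, transpose_apply, of_apply]
  split_ifs with h h' h' <;> simp_all

theorem mul_rectDiagonal_apply [NonUnitalNonAssocSemiring R] {a b : ℕ}
    (A : Matrix ι (Fin a) R) (d : ℕ → R) (x : ι) (j : Fin b) :
    (A * rectDiagonal a b d) x j = colOrZero A j x * d j := by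
  simp only [mul_apply, rectDiagonal, of_apply, mul_ite, mul_zero, colOrZero]
  split_ifs with h
  · rw [Finset.sum_eq_single ⟨j, h⟩ (fun i _ hi => if_neg fun e => hi (Fin.ext e)) (by simp)]
    simp
  · rw [zero_mul]
    refine Finset.sum_eq_zero fun i _ => if_neg ?_
    have := i.isLt
    omega

theorem rectDiagonal_mul_transpose [CommSemiring R] {a b : ℕ} {d : ℕ → R}
    (hd : ∀ i, b ≤ i → d i = 0) :
    rectDiagonal a b d * (rectDiagonal a b d)ᵀ = diagonal fun i : Fin a => d i ^ 2 := by
  ext i i'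
  rw [transpose_rectDiagonal, mul_rectDiagonal_apply, diagonal_apply]
  simp only [colOrZero, rectDiagonal, of_apply]
  split_ifs with h1 h2 h3 h3 h2 <;> simp_all [sq, Fin.ext_iff]

theorem transpose_rectDiagonal_mul [CommSemiring R] {a b : ℕ} {d : ℕ → R}
    (hd : ∀ i, a ≤ i → d i = 0) :
    (rectDiagonal a b d)ᵀ * rectDiagonal a b d = diagonal fun j : Fin b => d j ^ 2 := by
  simpa [transpose_rectDiagonal] using rectDiagonal_mul_transpose (a := b) hd

theorem one_sub_rectDiagonal_mul_transpose_mul_diagonal_inv [Field R] {a b : ℕ} {d : ℕ → R}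
    (hd : ∀ i, b ≤ i → d i = 0) (hne : ∀ i, d i ^ 2 ≠ 1) :
    (1 - rectDiagonal a b d * (rectDiagonal a b d)ᵀ)
      * diagonal (fun i : Fin a => (1 - d i ^ 2)⁻¹) = 1 := by
  rw [rectDiagonal_mul_transpose hd]
  exact one_sub_diagonal_mul_diagonal_inv fun i => hne i

theorem one_sub_transpose_rectDiagonal_mul_mul_diagonal_inv [Field R] {a b : ℕ} {d : ℕ → R}
    (hd : ∀ i, a ≤ i → d i = 0) (hne : ∀ i, d i ^ 2 ≠ 1) :
    (1 - (rectDiagonal a b d)ᵀ * rectDiagonal a b d)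
      * diagonal (fun j : Fin b => (1 - d j ^ 2)⁻¹) = 1 := by
  rw [transpose_rectDiagonal_mul hd]
  exact one_sub_diagonal_mul_diagonal_inv fun i => hne i

theorem transpose_colsFrom_mul_colsFrom_apply [NonUnitalNonAssocSemiring R] [Fintype ι]
    {p q : ℕ} (A : Matrix ι (Fin p) R) (B : Matrix ι (Fin q) R) (r : ℕ) (i : Fin (p - r))
    (j : Fin (q - r)) :
    ((colsFrom A r)ᵀ * colsFrom B r) i j = (Aᵀ * B) ⟨r + i, by omega⟩ ⟨r + j, by omega⟩ :=
  rfl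

theorem colsFrom_transpose_mul_self [NonAssocSemiring R] [Fintype ι] {q : ℕ}
    {A : Matrix ι (Fin q) R} (hA : Aᵀ * A = 1) (r : ℕ) :
    (colsFrom A r)ᵀ * colsFrom A r = 1 := by
  ext i j
  rw [transpose_colsFrom_mul_colsFrom_apply, hA, one_apply, one_apply]
  simp [Fin.ext_iff]

theorem transpose_colsFrom_mul_colsFrom_of_eq_rectDiagonal [NonUnitalNonAssocSemiring R]
    [Fintype ι] {p q : ℕ} {A : Matrix ι (Fin p) R} {B : Matrix ι (Fin q) R} {d : ℕ → R}
    (h : Aᵀ * B = rectDiagonal p q d) (r : ℕ) :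
    (colsFrom A r)ᵀ * colsFrom B r = rectDiagonal (p - r) (q - r) fun i => d (r + i) := by
  ext i j
  rw [transpose_colsFrom_mul_colsFrom_apply, h]
  simp [rectDiagonal]

theorem mul_colsFrom [NonUnitalNonAssocSemiring R] [Fintype κ] {q : ℕ} (W : Matrix ι κ R)
    (V : Matrix κ (Fin q) R) (r : ℕ) : W * colsFrom V r = colsFrom (W * V) r :=
  rfl

theorem sum_vecMulVec_eq_colsFrom_mul [Field R] {K p r t : ℕ} (V : Matrix κ (Fin K) R)
    (W : Matrix ι (Fin K) R) (Z : Matrix ι (Fin p) R) (σ : ℕ → R) (hrt : r ≤ t)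
    (htK : t ≤ K) (htp : t ≤ p) (hσ : ∀ i, t ≤ i → σ i = 0) :
    (∑ i ∈ (Finset.Ico r t).attach, (1 - σ i.1 ^ 2)⁻¹ • vecMulVec
        (fun a => V a ⟨i.1, (Finset.mem_Ico.mp i.2).2.trans_le htK⟩)
        (fun b => W b ⟨i.1, (Finset.mem_Ico.mp i.2).2.trans_le htK⟩))
      - (∑ i ∈ (Finset.Ico r t).attach, (σ i.1 / (1 - σ i.1 ^ 2)) • vecMulVec
        (fun a => V a ⟨i.1, (Finset.mem_Ico.mp i.2).2.trans_le htK⟩)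
        (fun b => Z b ⟨i.1, (Finset.mem_Ico.mp i.2).2.trans_le htp⟩))
      + (∑ i ∈ (Finset.Ico t K).attach, vecMulVec
        (fun a => V a ⟨i.1, (Finset.mem_Ico.mp i.2).2⟩)
        (fun b => W b ⟨i.1, (Finset.mem_Ico.mp i.2).2⟩))
      = colsFrom V r * (diagonal (fun j : Fin (K - r) => (1 - σ (r + j) ^ 2)⁻¹)
        * (colsFrom W r - colsFrom Z r * rectDiagonal (p - r) (K - r) fun i => σ (r + i))ᵀ) := by
  ext c b
  -- the `σ i` vanish on `[t, K)`, so both sides are `∑ i ∈ [r, K), F i`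
  set F : ℕ → R := fun i =>
    colOrZero V i c * ((1 - σ i ^ 2)⁻¹ * (colOrZero W i b - σ i * colOrZero Z i b))
  trans ∑ i ∈ Finset.Ico r K, F i
  · simp only [add_apply, sub_apply, sum_apply, smul_apply, vecMulVec_apply, smul_eq_mul,
      ← colOrZero_of_lt]
    rw [Finset.sum_attach _ fun i => (1 - σ i ^ 2)⁻¹ * (colOrZero V i c * colOrZero W i b),
      Finset.sum_attach _ fun i => σ i / (1 - σ i ^ 2) * (colOrZero V i c * colOrZero Z i b),
      Finset.sum_attach _ fun i => colOrZero V i c * colOrZero W i b,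
      ← Finset.sum_Ico_consecutive F hrt htK, ← Finset.sum_sub_distrib]
    congr 1
    · refine Finset.sum_congr rfl fun i _ => ?_
      simp only [F]
      ring
    · refine Finset.sum_congr rfl fun i hi => ?_
      simp [F, hσ i (Finset.mem_Ico.mp hi).1]
  · rw [Finset.sum_Ico_eq_sum_range, ← Fin.sum_univ_eq_sum_range (fun j => F (r + j)),
      mul_apply]
    refine Finset.sum_congr rfl fun j _ => ?_
    have hj : r + j < K := by omega
    rw [diagonal_mul, transpose_apply, sub_apply, mul_rectDiagonal_apply, colOrZero_colsFrom]
    simp only [F, colOrZero_of_lt V hj, colOrZero_of_lt W hj]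
    rw [mul_comm (colOrZero Z _ b)]
    rfl

end Columns

end Matrix

theorem abs_inv_one_sub_sq_le {x y : ℝ} (hx : 0 ≤ x) (hxy : x ≤ y) (hy : y < 1) :
    |(1 - x ^ 2)⁻¹| ≤ (1 - y ^ 2)⁻¹ := by
  have hy' : 0 < 1 - y ^ 2 := by nlinarith
  rw [abs_of_pos (inv_pos.mpr (by nlinarith))]
  exact inv_anti₀ hy' (by nlinarith)

theorem stmt_6
    (n p K r s : ℕ) (hrp : r + s ≤ p) (hrK : r + s ≤ K)
    (Z : Matrix (Fin n) (Fin p) ℝ) (W : Matrix (Fin n) (Fin K) ℝ)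
    (hZ : Zᵀ * Z = 1) (hW : Wᵀ * W = 1)
    (U : Matrix (Fin p) (Fin p) ℝ) (V : Matrix (Fin K) (Fin K) ℝ)
    (hU : Uᵀ * U = 1) (hV : Vᵀ * V = 1)
    (σ : ℕ → ℝ)
    (hσlt : σ r < 1)
    (hσanti : ∀ i j, i ≤ j → σ j ≤ σ i)
    (hσzero : ∀ i, r + s ≤ i → σ i = 0)
    (hSVD : Zᵀ * W
      = U * (Matrix.of fun (i : Fin p) (j : Fin K) =>
          if (i : ℕ) = (j : ℕ) then σ (i : ℕ) else 0) * Vᵀ)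
    (Zt : Matrix (Fin n) (Fin p) ℝ) (hZt : Zt = Z * U)
    (Wt : Matrix (Fin n) (Fin K) ℝ) (hWt : Wt = W * V)
    (M : Matrix (Fin n) (Fin (p - r) ⊕ Fin (K - r)) ℝ)
    (hMl : ∀ (a : Fin n) (j : Fin (p - r)),
      M a (Sum.inl j) = Zt a ⟨r + j.1, by have := j.2; omega⟩)
    (hMr : ∀ (a : Fin n) (j : Fin (K - r)),
      M a (Sum.inr j) = Wt a ⟨r + j.1, by have := j.2; omega⟩)
    (PN : Matrix (Fin n) (Fin n) ℝ)
    (hPN : PN = (Matrix.of fun (a : Fin n) (j : Fin (p - r) ⊕ Fin (K - r)) =>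
        Sum.elim (fun _ : Fin (p - r) => (0 : ℝ))
                 (fun j' : Fin (K - r) => Wt a ⟨r + j'.1, by have := j'.2; omega⟩) j)
        * (Mᵀ * M)⁻¹ * Mᵀ)
    (Q : Matrix (Fin K) (Fin n) ℝ)
    (hQ : Q = (∑ i ∈ (Finset.Ico r (r + s)).attach,
            (1 - σ i.1 ^ 2)⁻¹ • Matrix.vecMulVec
              (fun a : Fin K => V a ⟨i.1, by have := (Finset.mem_Ico.mp i.2).2; omega⟩)
              (fun a : Fin n => Wt a ⟨i.1, by have := (Finset.mem_Ico.mp i.2).2; omega⟩))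
       - (∑ i ∈ (Finset.Ico r (r + s)).attach,
            (σ i.1 / (1 - σ i.1 ^ 2)) • Matrix.vecMulVec
              (fun a : Fin K => V a ⟨i.1, by have := (Finset.mem_Ico.mp i.2).2; omega⟩)
              (fun a : Fin n => Zt a ⟨i.1, by have := (Finset.mem_Ico.mp i.2).2; omega⟩))
       + (∑ i ∈ (Finset.Ico (r + s) K).attach,
            Matrix.vecMulVec
              (fun a : Fin K => V a ⟨i.1, (Finset.mem_Ico.mp i.2).2⟩)
              (fun a : Fin n => Wt a ⟨i.1, (Finset.mem_Ico.mp i.2).2⟩))) :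
    PN = W * Q ∧ specNorm Q ≤ 2 / (1 - σ r ^ 2) := by
  have hσr : ∀ i, 0 ≤ σ (r + i) ∧ σ (r + i) ≤ σ r := fun i =>
    ⟨(hσzero _ (le_max_right _ (r + s))).symm.trans_le (hσanti _ _ (le_max_left _ _)),
      hσanti _ _ (Nat.le_add_right r i)⟩
  have hne : ∀ i, σ (r + i) ^ 2 ≠ 1 := fun i =>
    ((sq_lt_one_iff₀ (hσr i).1).mpr ((hσr i).2.trans_lt hσlt)).ne
  set X := colsFrom Zt r
  set Y := colsFrom Wt r
  have hX : Xᵀ * X = 1 :=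
    colsFrom_transpose_mul_self (hZt ▸ transpose_mul_self_mul_eq_one hZ hU) r
  have hY : Yᵀ * Y = 1 :=
    colsFrom_transpose_mul_self (hWt ▸ transpose_mul_self_mul_eq_one hW hV) r
  have hD : Xᵀ * Y = rectDiagonal (p - r) (K - r) fun i => σ (r + i) :=
    transpose_colsFrom_mul_colsFrom_of_eq_rectDiagonal
      (by rw [hZt, hWt]; exact transpose_mul_mul_eq_of_transpose_mul_eq hSVD hU hV) r
  have hA := hD ▸ one_sub_rectDiagonal_mul_transpose_mul_diagonal_inv
    (fun i _ => hσzero (r + i) (by omega)) hne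
  have hB := hD ▸ one_sub_transpose_rectDiagonal_mul_mul_diagonal_inv
    (fun i _ => hσzero (r + i) (by omega)) hne
  have hM : M = fromCols X Y := by
    ext a (j | j)
    exacts [hMl a j, hMr a j]
  have hQ' : Q = colsFrom V r * (diagonal (fun j : Fin (K - r) => (1 - σ (r + j) ^ 2)⁻¹)
      * (Y - X * (Xᵀ * Y))ᵀ) := by
    rw [hQ, hD]
    exact sum_vecMulVec_eq_colsFrom_mul V Wt Zt σ (Nat.le_add_right r s) hrK hrp hσzero
  constructor
  · rw [hPN, hQ', hM, ← Matrix.mul_assoc, mul_colsFrom, ← hWt]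
    exact fromCols_zero_mul_inv_mul_transpose X Y hX hY hA hB
  · rw [hQ', div_eq_mul_inv]
    open scoped Matrix.Norms.L2Operator in
    exact l2_opNorm_mul_mul_transpose_sub_le (colsFrom_transpose_mul_self hV r) hX hY
      (l2_opNorm_diagonal_le (inv_nonneg.mpr (by nlinarith [hσr 0]))
        fun i => abs_inv_one_sub_sq_le (hσr i).1 (hσr i).2 hσlt)
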